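/- arXiv:2308.06243 — 2 statements merged into one kernel-verified Lean document; each statement's English description precedes it below -/
import Mathlib

section
/- Unisolvence of volumetric dofs for 0-form bubbles on the tesseract: if u(x) = (1−x₁²)(1−x₂²)(1−x₃²)(1−x₄²)·w(x) where w ∈ Q^{k−2,k−2,k−2,k−2}, and ∫_{[−1,1]⁴} u·q dx = 0 for all q ∈ Q^{k−2,k−2,k−2,k−2}, then u ≡ 0. -/
open MeasureTheory Set

/-
Testing the degree-of-freedom conditions against `q = w` itself gives
`∫ (∏ᵢ (1 - xᵢ²)) w(x)² dx = 0`. The integrand is continuous and nonnegative on the cube and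
the bubble `∏ᵢ (1 - xᵢ²)` is positive on its interior, so `w` vanishes on the open cube.
A polynomial vanishing on a box with infinite sides is zero, hence `u = bubble · w = 0`.
-/

theorem eqOn_zero_of_setIntegral_eq_zero_of_nonneg {X : Type*} [TopologicalSpace X]
    [MeasurableSpace X] {μ : Measure X} [μ.IsOpenPosMeasure] {f : X → ℝ} {s U : Set X}
    (hs : MeasurableSet s) (hfi : IntegrableOn f s μ) (hnn : ∀ x ∈ s, 0 ≤ f x)
    (hzero : ∫ x in s, f x ∂μ = 0) (hU : IsOpen U) (hUs : U ⊆ s) (hfU : ContinuousOn f U) :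
    EqOn f 0 U :=
  have hae : f =ᵐ[μ.restrict s] 0 :=
    (setIntegral_eq_zero_iff_of_nonneg_ae (ae_restrict_of_forall_mem hs hnn) hfi).1 hzero
  Measure.eqOn_open_of_ae_eq (ae_restrict_of_ae_restrict_of_subset hUs hae) hU hfU
    continuousOn_const

section Bubble

variable {ι : Type*} [Fintype ι] {x : ι → ℝ}

theorem prod_one_sub_sq_nonneg (hx : x ∈ Icc (fun _ => -1) (fun _ => 1)) :
    0 ≤ ∏ i, (1 - x i ^ 2) :=
  Finset.prod_nonneg fun i _ => by nlinarith [hx.1 i, hx.2 i]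

theorem prod_one_sub_sq_pos (hx : x ∈ univ.pi fun _ => Ioo (-1 : ℝ) 1) :
    0 < ∏ i, (1 - x i ^ 2) :=
  Finset.prod_pos fun i _ => by nlinarith [(hx i trivial).1, (hx i trivial).2]

theorem MvPolynomial.eq_zero_of_setIntegral_prod_one_sub_sq_mul_sq_eq_zero
    (w : MvPolynomial ι ℝ)
    (h : ∫ x in Icc (fun _ : ι => (-1 : ℝ)) (fun _ => 1),
      (∏ i, (1 - x i ^ 2)) * MvPolynomial.eval x w ^ 2 = 0) :
    w = 0 := by
  set f : (ι → ℝ) → ℝ := fun x => (∏ i, (1 - x i ^ 2)) * MvPolynomial.eval x w ^ 2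
  have hf : Continuous f :=
    (continuous_finsetProd _ fun i _ => by fun_prop).mul ((MvPolynomial.continuous_eval w).pow 2)
  have hf_zero : EqOn f 0 (univ.pi fun _ => Ioo (-1 : ℝ) 1) :=
    eqOn_zero_of_setIntegral_eq_zero_of_nonneg measurableSet_Icc
      (hf.continuousOn.integrableOn_compact isCompact_Icc)
      (fun x hx => mul_nonneg (prod_one_sub_sq_nonneg hx) (sq_nonneg _)) h
      (isOpen_set_pi finite_univ fun _ _ => isOpen_Ioo)
      (fun x hx => ⟨fun i => (hx i trivial).1.le, fun i => (hx i trivial).2.le⟩)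
      hf.continuousOn
  refine MvPolynomial.funext_set (fun _ => Ioo (-1 : ℝ) 1) (fun _ => Ioo_infinite (by norm_num))
    fun x hx => ?_
  simpa using (mul_eq_zero.1 (hf_zero hx)).resolve_left (prod_one_sub_sq_pos hx).ne'

end Bubble

theorem tesseract_zeroForm_bubble_unisolvent_general (k : ℕ)
    (w : MvPolynomial (Fin 4) ℝ)
    (hw : w ∈ MvPolynomial.restrictDegree (Fin 4) ℝ (k - 2))
    (u : (Fin 4 → ℝ) → ℝ)
    (hu : ∀ x, u x = (∏ i : Fin 4, (1 - (x i) ^ 2)) * MvPolynomial.eval x w)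
    (hvanish : ∀ q ∈ MvPolynomial.restrictDegree (Fin 4) ℝ (k - 2),
      (∫ x in Set.Icc (fun _ : Fin 4 => (-1 : ℝ)) (fun _ => 1),
        u x * MvPolynomial.eval x q) = 0) :
    ∀ x, u x = 0 := by
  have hw_zero : w = 0 := by
    refine MvPolynomial.eq_zero_of_setIntegral_prod_one_sub_sq_mul_sq_eq_zero w ?_
    simpa only [hu, mul_assoc, sq] using hvanish w hw
  simp [hu, hw_zero]

/-- Unisolvence of volumetric dofs for 0-form bubbles on the tesseract. -/
theorem tesseract_zeroForm_bubble_unisolvent (k : ℕ) (hk : 2 ≤ k)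
    (w : MvPolynomial (Fin 4) ℝ)
    (hw : w ∈ MvPolynomial.restrictDegree (Fin 4) ℝ (k - 2))
    (u : (Fin 4 → ℝ) → ℝ)
    (hu : ∀ x, u x = (∏ i : Fin 4, (1 - (x i) ^ 2)) * MvPolynomial.eval x w)
    (hvanish : ∀ q ∈ MvPolynomial.restrictDegree (Fin 4) ℝ (k - 2),
      (∫ x in Set.Icc (fun _ : Fin 4 => (-1 : ℝ)) (fun _ => 1),
        u x * MvPolynomial.eval x q) = 0) :
    ∀ x, u x = 0 :=
  tesseract_zeroForm_bubble_unisolvent_general k w hw u hu hvanish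
end

section
/- Unisolvence of volumetric dofs for 3-form bubbles on the tesseract: if G : [−1,1]⁴ → ℝ⁴ has components G_i(x) = (1−x_i²)·w_i(x), where w₁ ∈ Q^{k−2,k−1,k−1,k−1}, w₂ ∈ Q^{k−1,k−2,k−1,k−1}, w₃ ∈ Q^{k−1,k−1,k−2,k−1}, w₄ ∈ Q^{k−1,k−1,k−1,k−2}, and ∫_{[−1,1]⁴} G·q dx = 0 for all q in Q^{k−2,k−1,k−1,k−1} × Q^{k−1,k−2,k−1,k−1} × Q^{k−1,k−1,k−2,k−1} × Q^{k−1,k−1,k−1,k−2}, then G ≡ 0. -/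
/-!
Testing the degrees of freedom against `q = w` itself gives `∫ ∑ᵢ (1 - xᵢ²) wᵢ² = 0` over the
cube. The integrand is continuous and nonnegative there, so it vanishes on the open cube, where
every bubble factor `1 - xᵢ²` is positive. Hence each `wᵢ` vanishes on a nonempty open set and,
being a polynomial (an analytic function), everywhere.
-/

open MeasureTheory

/-- Per-component variable-degree bounds for the 3-form volumetric test space:
degree `k−2` in variable `i` for component `i`, and `k−1` in the others. -/
def dBound (k : ℕ) (i j : Fin 4) : ℕ := if i = j then k - 2 else k - 1

open Set

theorem MvPolynomial.eval_eq_zero_of_eqOn_zero_of_isOpen {𝕜 σ : Type*} [RCLike 𝕜]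
    [Fintype σ] {p : MvPolynomial σ 𝕜} {U : Set (σ → 𝕜)} (hU : IsOpen U)
    (hne : U.Nonempty) (h : EqOn (eval · p) 0 U) (x : σ → 𝕜) : eval x p = 0 := by
  obtain ⟨x₀, hx₀⟩ := hne
  exact (AnalyticOnNhd.eval_mvPolynomial p).eqOn_zero_of_preconnected_of_eventuallyEq_zero
    isPreconnected_univ (mem_univ x₀) (Filter.eventually_of_mem (hU.mem_nhds hx₀) h) (mem_univ x)

theorem MeasureTheory.eqOn_zero_of_setIntegral_eq_zero {X : Type*} [MeasurableSpace X]
    [TopologicalSpace X] [OpensMeasurableSpace X] {μ : Measure X} [μ.IsOpenPosMeasure]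
    {f : X → ℝ} {s : Set X} (hs : MeasurableSet s) (hf : Continuous f) (hfs : IntegrableOn f s μ)
    (hnonneg : ∀ x ∈ s, 0 ≤ f x) (hint : ∫ x in s, f x ∂μ = 0) : EqOn f 0 (interior s) := by
  have hae : f =ᵐ[μ.restrict s] 0 :=
    (setIntegral_eq_zero_iff_of_nonneg_ae ((ae_restrict_iff' hs).2 (.of_forall hnonneg)) hfs).1 hint
  exact μ.eqOn_open_of_ae_eq (ae_restrict_of_ae_restrict_of_subset interior_subset hae)
    isOpen_interior hf.continuousOn continuousOn_const

theorem eq_zero_of_sum_mul_sq_eq_zero {ι : Type*} {s : Finset ι} {a v : ι → ℝ}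
    (ha : ∀ i ∈ s, 0 < a i) (h : ∑ i ∈ s, a i * v i ^ 2 = 0) {i : ι} (hi : i ∈ s) : v i = 0 := by
  have hterm := (Finset.sum_eq_zero_iff_of_nonneg fun j hj ↦
    mul_nonneg (ha j hj).le (sq_nonneg (v j))).1 h i hi
  simpa [(ha i hi).ne'] using hterm

theorem Set.interior_Icc_pi {ι α : Type*} [Finite ι] [LinearOrder α] [TopologicalSpace α]
    [OrderTopology α] [DenselyOrdered α] [NoMinOrder α] [NoMaxOrder α] (a b : ι → α) :
    interior (Icc a b) = pi univ fun i ↦ Ioo (a i) (b i) := by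
  simp only [← pi_univ_Icc, interior_pi_set finite_univ, interior_Icc]

theorem tesseract_threeForm_bubble_unisolvent_general (k : ℕ)
    (w : Fin 4 → MvPolynomial (Fin 4) ℝ)
    (hw : ∀ i j, MvPolynomial.degreeOf j (w i) ≤ dBound k i j)
    (G : (Fin 4 → ℝ) → Fin 4 → ℝ)
    (hG : ∀ x i, G x i = (1 - (x i) ^ 2) * MvPolynomial.eval x (w i))
    (hvanish : ∀ q : Fin 4 → MvPolynomial (Fin 4) ℝ,
      (∀ i j, MvPolynomial.degreeOf j (q i) ≤ dBound k i j) →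
      (∫ x in Set.Icc (fun _ : Fin 4 => (-1 : ℝ)) (fun _ => 1),
        ∑ i : Fin 4, G x i * MvPolynomial.eval x (q i)) = 0) :
    ∀ x i, G x i = 0 := by
  set f : (Fin 4 → ℝ) → ℝ := fun x ↦ ∑ i, (1 - x i ^ 2) * MvPolynomial.eval x (w i) ^ 2
  have hf_cont : Continuous f := continuous_finsetSum _ fun i _ ↦
    ((continuous_const.sub ((continuous_apply i).pow 2)).mul
      ((MvPolynomial.continuous_eval (w i)).pow 2))
  have hf_int : ∫ x in Icc (-1) 1, f x = 0 := by
    rw [← hvanish w hw]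
    congr 1 with x
    simp only [f, hG]
    ring_nf
  have hf_nonneg : ∀ x ∈ Icc (-1 : Fin 4 → ℝ) 1, 0 ≤ f x := fun x hx ↦
    Finset.sum_nonneg fun i _ ↦ mul_nonneg
      (sub_nonneg.2 <| (sq_le_one_iff_abs_le_one _).2 <| abs_le.2 ⟨hx.1 i, hx.2 i⟩) (sq_nonneg _)
  have hf_zero : EqOn f 0 (pi univ fun _ ↦ Ioo (-1) 1) :=
    (eqOn_zero_of_setIntegral_eq_zero measurableSet_Icc hf_cont
      (hf_cont.continuousOn.integrableOn_compact isCompact_Icc) hf_nonneg hf_int).mono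
      (interior_Icc_pi (-1) 1).superset
  have hw_zero : ∀ i, EqOn (MvPolynomial.eval · (w i)) 0 (pi univ fun _ ↦ Ioo (-1) 1) :=
    fun i x hx ↦ eq_zero_of_sum_mul_sq_eq_zero
      (fun j _ ↦ sub_pos.2 <| (sq_lt_one_iff_abs_lt_one _).2 <| abs_lt.2 (hx j trivial))
      (hf_zero hx) (Finset.mem_univ i)
  intro x i
  rw [hG, MvPolynomial.eval_eq_zero_of_eqOn_zero_of_isOpen
    (isOpen_set_pi finite_univ fun _ _ ↦ isOpen_Ioo) ⟨0, by simp⟩ (hw_zero i) x, mul_zero]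

/-- Unisolvence of volumetric dofs for 3-form bubbles on the tesseract. -/
theorem tesseract_threeForm_bubble_unisolvent (k : ℕ) (hk : 2 ≤ k)
    (w : Fin 4 → MvPolynomial (Fin 4) ℝ)
    (hw : ∀ i j, MvPolynomial.degreeOf j (w i) ≤ dBound k i j)
    (G : (Fin 4 → ℝ) → Fin 4 → ℝ)
    (hG : ∀ x i, G x i = (1 - (x i) ^ 2) * MvPolynomial.eval x (w i))
    (hvanish : ∀ q : Fin 4 → MvPolynomial (Fin 4) ℝ,
      (∀ i j, MvPolynomial.degreeOf j (q i) ≤ dBound k i j) →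
      (∫ x in Set.Icc (fun _ : Fin 4 => (-1 : ℝ)) (fun _ => 1),
        ∑ i : Fin 4, G x i * MvPolynomial.eval x (q i)) = 0) :
    ∀ x i, G x i = 0 :=
  tesseract_threeForm_bubble_unisolvent_general k w hw G hG hvanish
end
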